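/- arXiv:2409.01237 — 2 statements merged into one kernel-verified Lean document; each statement's English description precedes it below -/
import Mathlib

section
/- Let $\mathcal{O}$ be a commutative ring, $g, p_1,\ldots,p_n \in \mathcal{O}$, and suppose $g$ is a nonzerodivisor in $\mathcal{O}/\langle p_1,\ldots,p_n\rangle$. Then the sequence $0 \to \mathcal{O}/\langle p_1,\ldots,p_n\rangle \xrightarrow{\cdot g} \mathcal{O}/\langle gp_1,\ldots,gp_n\rangle \to \mathcal{O}/\langle g\rangle \to 0$ is exact, where the first map is multiplication by $g$ and the second is the natural projection. -/
/-- the sequence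
`0 → 𝓞/⟨p₁,…,pₙ⟩ --·g--> 𝓞/⟨gp₁,…,gpₙ⟩ → 𝓞/⟨g⟩ → 0` is exact, when `g` is a
nonzerodivisor on `𝓞/⟨p₁,…,pₙ⟩`.  Exactness is expressed elementwise:
(i) injectivity of multiplication by `g`; (ii) exactness at the middle term
(the class of `z` is killed in `𝓞/⟨g⟩` iff it is `g·w` modulo `⟨gp₁,…,gpₙ⟩`);
(iii) surjectivity of the projection. -/
theorem stmt_1 (O : Type*) [CommRing O] (n : ℕ) (g : O) (p : Fin n → O)
    (hreg : ∀ z : O, g * z ∈ Ideal.span (Set.range p) →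
      z ∈ Ideal.span (Set.range p)) :
    (∀ z : O, g * z ∈ Ideal.span (Set.range fun i => g * p i) →
        z ∈ Ideal.span (Set.range p)) ∧
    (∀ z : O, z ∈ Ideal.span {g} ↔
        ∃ w : O, z - g * w ∈ Ideal.span (Set.range fun i => g * p i)) ∧
    (∀ c : O ⧸ Ideal.span ({g} : Set O), ∃ z : O, Ideal.Quotient.mk _ z = c) := by
  have key : ∀ z : O, z ∈ Ideal.span (Set.range fun i => g * p i) →
      ∃ y ∈ Ideal.span (Set.range p), z = g * y := by
    intro z hz
    rw [Ideal.mem_span_range_iff_exists_fun] at hz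
    obtain ⟨c, hc⟩ := hz
    refine ⟨∑ i, c i * p i, ?_, ?_⟩
    · rw [Ideal.mem_span_range_iff_exists_fun]; exact ⟨c, rfl⟩
    · rw [← hc, Finset.mul_sum]; apply Finset.sum_congr rfl; intros; ring
  refine ⟨?_, ?_, ?_⟩
  · intro z hz
    obtain ⟨y, hy, hzy⟩ := key _ hz
    have : g * (z - y) ∈ Ideal.span (Set.range p) := by
      have : g * (z - y) = 0 := by rw [mul_sub, ← hzy]; ring
      rw [this]; exact zero_mem _
    have := hreg _ this
    simpa using add_mem this hy
  · intro z
    constructor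
    · intro hz
      rw [Ideal.mem_span_singleton] at hz
      obtain ⟨w, hw⟩ := hz
      exact ⟨w, by rw [hw, mul_comm, sub_self]; exact zero_mem _⟩
    · rintro ⟨w, hw⟩
      obtain ⟨y, hy, hzy⟩ := key _ hw
      rw [Ideal.mem_span_singleton]
      exact ⟨w + y, by linear_combination hzy⟩
  · exact fun c => Quotient.exists_rep c
end

section
/- Let $X = \{y^p - x^q = 0\} \subset (\mathbb{C}^2,0)$ with $p, q \geq 2$ coprime, and let $\mathcal{F}$ be the foliation defined by $\omega = \lambda x\,dy + y\,dx$ with $\lambda \in \mathbb{C}$, $\lambda \neq -p/q$ and $\lambda \neq 0$. Then the Bruce-Roberts number $\mu_{BR}(\mathcal{F},X) = \dim_{\mathbb{C}} \mathcal{O}_2/\omega(\Theta_X)$ equals $p + q$. -/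
noncomputable section

/-- Model of the ring of germs of holomorphic functions at `0 ∈ ℂⁿ`
(formal power series model). -/
abbrev On (n : ℕ) : Type := MvPowerSeries (Fin n) ℂ

/-- Formal partial derivative `∂/∂xᵢ` on `On n`. -/
def pd {n : ℕ} (i : Fin n) (f : On n) : On n :=
  fun e => ((e i : ℂ) + 1) * MvPowerSeries.coeff (R := ℂ) (e + Finsupp.single i 1) f

/-- Evaluation of the 1-form with coefficients `A` on a vector field `ξ`:
`ω(ξ) = ∑ Aᵢ ξᵢ`. -/
def ev {n : ℕ} (A : Fin n → On n) : (Fin n → On n) →ₗ[On n] On n :=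
  Fintype.linearCombination (On n) A

/-- The module `Θ_X` of vector fields tangent to the hypersurface `X = {φ = 0}`:
those `ξ` with `dφ(ξ) ∈ ⟨φ⟩`. -/
def ThetaX {n : ℕ} (φ : On n) : Submodule (On n) (Fin n → On n) :=
  Submodule.comap (ev fun i => pd i φ) (Ideal.span {φ})

/-- The submodule `Θ_X^T` of trivial logarithmic vector fields of `X = {φ = 0}`. -/
def ThetaXT {n : ℕ} (φ : On n) : Submodule (On n) (Fin n → On n) :=
  Submodule.span (On n)
    ((Set.range fun i => Pi.single i φ) ∪
      {v | ∃ j k : Fin n, j ≠ k ∧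
        v = Pi.single k (pd j φ) - Pi.single j (pd k φ)})

/-! Write `x = X 0`, `y = X 1` and `φ = yᵖ - x^q`. Since `φ` is quasi-homogeneous, `Θ_X` is
generated by the Euler field `p x ∂ₓ + q y ∂_y` and the Hamiltonian field `p yᵖ⁻¹ ∂ₓ + q x^{q-1} ∂_y`
(Saito): subtracting a multiple of the Euler field from `ξ ∈ Θ_X` makes `dφ(ξ) = 0`, and then the
coprimality of `x^{q-1}` and `yᵖ⁻¹` forces `ξ` to be a multiple of the Hamiltonian field. Hence
`ω(Θ_X) = ⟨(qλ + p) xy, p yᵖ + λq x^q⟩ = ⟨xy, p yᵖ + λq x^q⟩`, and modulo this ideal the monomials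
`1, x, …, x^q, y, …, yᵖ⁻¹` form a basis, so the quotient has dimension `p + q`. -/

open MvPowerSeries Finsupp

section PowerSeries

variable {σ R : Type*}

section CommSemiring

variable [CommSemiring R]

theorem MvPowerSeries.coeff_add_single_mul_X_pow (i : σ) (k : ℕ) (m : σ →₀ ℕ)
    (u : MvPowerSeries σ R) : coeff (m + single i k) (u * X i ^ k) = coeff m u := by
  rw [X_pow_eq, coeff_mul_monomial, if_pos le_add_self, add_tsub_cancel_right, mul_one]

theorem MvPowerSeries.coeff_single_mul_C_mul_X_pow (i : σ) (k n : ℕ) (b : R)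
    (v : MvPowerSeries σ R) :
    coeff (single i k) (v * (C b * X i ^ n)) =
      if n ≤ k then b * coeff (single i (k - n)) v else 0 := by
  rw [mul_left_comm, coeff_C_mul, X_pow_eq, coeff_mul_monomial]
  simp only [single_le_iff, single_eq_same, ← single_tsub, mul_one, mul_ite, mul_zero]

theorem MvPowerSeries.coeff_single_mul_C_mul_X_pow_of_ne {i j : σ} (hij : i ≠ j) (k : ℕ)
    {n : ℕ} (hn : n ≠ 0) (a : R) (v : MvPowerSeries σ R) :
    coeff (single i k) (v * (C a * X j ^ n)) = 0 := by
  rw [← mul_assoc]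
  refine X_pow_dvd_iff.mp (dvd_mul_left _ _) _ ?_
  rw [single_eq_of_ne' hij]
  exact Nat.pos_of_ne_zero hn

theorem MvPowerSeries.X_zero_mul_X_one_dvd_iff {f : MvPowerSeries (Fin 2) R} :
    X 0 * X 1 ∣ f ↔ ∀ k, coeff (single 0 k) f = 0 ∧ coeff (single 1 k) f = 0 := by
  have eq_single {m : Fin 2 →₀ ℕ} {i j : Fin 2} (hij : i ≠ j) (h : m i = 0) :
      m = single j (m j) := by
    ext k
    fin_cases i <;> fin_cases j <;> fin_cases k <;> simp_all
  constructor
  · intro h k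
    exact ⟨X_dvd_iff.mp (dvd_of_mul_left_dvd h) _ (single_eq_of_ne' zero_ne_one),
      X_dvd_iff.mp (dvd_of_mul_right_dvd h) _ (single_eq_of_ne' one_ne_zero)⟩
  · intro h
    obtain ⟨g, rfl⟩ : X 0 ∣ f := X_dvd_iff.mpr fun m hm => by
      rw [eq_single zero_ne_one hm]
      exact (h _).2
    refine mul_dvd_mul_left _ (X_dvd_iff.mpr fun m hm => ?_)
    rw [← coeff_add_single_mul_X_pow 0 1 m, pow_one, mul_comm, eq_single one_ne_zero hm,
      ← single_add]
    exact (h _).1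

end CommSemiring

theorem MvPowerSeries.exists_of_mul_X_pow_eq_mul_X_pow [CommRing R] {i j : σ} (hij : i ≠ j)
    {m n : ℕ} {u v : MvPowerSeries σ R} (h : u * X i ^ m = v * X j ^ n) :
    ∃ s, u = X j ^ n * s ∧ v = s * X i ^ m := by
  obtain ⟨s, rfl⟩ : X j ^ n ∣ u := by
    refine X_pow_dvd_iff.mpr fun e he => ?_
    rw [← coeff_add_single_mul_X_pow i m, h]
    refine X_pow_dvd_iff.mp (dvd_mul_left _ _) _ ?_
    rwa [Finsupp.add_apply, single_eq_of_ne' hij, add_zero]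
  refine ⟨s, rfl, ?_⟩
  have hX : (X j ^ n : MvPowerSeries σ R) ∈ nonZeroDivisors (MvPowerSeries σ R) :=
    pow_mem X_mem_nonzeroDivisors n
  rw [← mul_cancel_right_mem_nonZeroDivisors hX, ← h]
  ring

end PowerSeries

section Colength

variable {K : Type*} [Field K] {p q : ℕ} {a b : K}

/- Its kernel is `⟨xy, a yᵖ + b x^q⟩`: it records the coefficients of `xⁱ` (`i < q`) and of
`yʲ` (`0 < j < p`), and the combination of those of `x^q` and `yᵖ` that kills `a yᵖ + b x^q`. -/
variable (p q a b) in
def axisCoeffMap :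
    MvPowerSeries (Fin 2) K →ₗ[K] (Fin q → K) × (Fin (p - 1) → K) × K :=
  (LinearMap.pi fun i : Fin q => coeff (single 0 (i : ℕ))).prod
    ((LinearMap.pi fun j : Fin (p - 1) => coeff (single 1 ((j : ℕ) + 1))).prod
      (a • coeff (single 0 q) - b • coeff (single 1 p)))

theorem axisCoeffMap_apply (f : MvPowerSeries (Fin 2) K) :
    axisCoeffMap p q a b f =
      (fun i : Fin q => coeff (single 0 (i : ℕ)) f,
        fun j : Fin (p - 1) => coeff (single 1 ((j : ℕ) + 1)) f,
        a * coeff (single 0 q) f - b * coeff (single 1 p) f) :=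
  rfl

theorem axisCoeffMap_eq_zero_iff {f : MvPowerSeries (Fin 2) K} :
    axisCoeffMap p q a b f = 0 ↔
      (∀ k < q, coeff (single 0 k) f = 0) ∧ (∀ k, 0 < k → k < p → coeff (single 1 k) f = 0) ∧
        a * coeff (single 0 q) f = b * coeff (single 1 p) f := by
  simp only [axisCoeffMap_apply, Prod.ext_iff, funext_iff, Fin.forall_iff, Prod.fst_zero,
    Prod.snd_zero, Pi.zero_apply, sub_eq_zero]
  refine and_congr_right' (and_congr_left'
    ⟨fun h k hk hkp => ?_, fun h j hj => h _ j.succ_pos (by omega)⟩)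
  obtain ⟨j, rfl⟩ := Nat.exists_eq_add_one_of_ne_zero hk.ne'
  exact h j (by omega)

theorem coeff_single_zero_mul_cusp (hp : p ≠ 0) (k : ℕ) (v : MvPowerSeries (Fin 2) K) :
    coeff (single 0 k) (v * (C a * X 1 ^ p + C b * X 0 ^ q)) =
      if q ≤ k then b * coeff (single 0 (k - q)) v else 0 := by
  rw [mul_add, map_add, coeff_single_mul_C_mul_X_pow_of_ne zero_ne_one k hp,
    coeff_single_mul_C_mul_X_pow, zero_add]

theorem coeff_single_one_mul_cusp (hq : q ≠ 0) (k : ℕ) (v : MvPowerSeries (Fin 2) K) :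
    coeff (single 1 k) (v * (C a * X 1 ^ p + C b * X 0 ^ q)) =
      if p ≤ k then a * coeff (single 1 (k - p)) v else 0 := by
  rw [mul_add, map_add, coeff_single_mul_C_mul_X_pow_of_ne one_ne_zero k hq,
    coeff_single_mul_C_mul_X_pow, add_zero]

theorem span_le_ker_axisCoeffMap (hp : p ≠ 0) (hq : q ≠ 0) :
    (Ideal.span {X 0 * X 1, C a * X 1 ^ p + C b * X 0 ^ q}).restrictScalars K ≤
      LinearMap.ker (axisCoeffMap p q a b) := by
  rintro _ hf
  obtain ⟨u, v, rfl⟩ := Ideal.mem_span_pair.mp hf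
  have hxy := X_zero_mul_X_one_dvd_iff.mp (dvd_mul_left (X 0 * X 1) u)
  rw [LinearMap.mem_ker, axisCoeffMap_eq_zero_iff]
  simp only [map_add, (hxy _).1, (hxy _).2, zero_add, coeff_single_zero_mul_cusp hp,
    coeff_single_one_mul_cusp hq]
  refine ⟨fun k hk => if_neg hk.not_ge, fun k _ hk => if_neg hk.not_ge, ?_⟩
  simp only [le_refl, if_true, Nat.sub_self, single_zero]
  ring

theorem ker_axisCoeffMap_le_span (hp : p ≠ 0) (hq : q ≠ 0) (ha : a ≠ 0) (hb : b ≠ 0) :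
    LinearMap.ker (axisCoeffMap p q a b) ≤
      (Ideal.span {X 0 * X 1, C a * X 1 ^ p + C b * X 0 ^ q}).restrictScalars K := by
  intro f hf
  obtain ⟨hx, hy, hxy⟩ := axisCoeffMap_eq_zero_iff.mp hf
  -- `h` divides the axis parts `f(x, 0)` and `f(0, y)` by `b x^q` and `a yᵖ`
  let h : MvPowerSeries (Fin 2) K := fun e =>
    if e 1 = 0 then b⁻¹ * coeff (e + single 0 q) f
    else if e 0 = 0 then a⁻¹ * coeff (e + single 1 p) f else 0
  have hcoeff (e : Fin 2 →₀ ℕ) : coeff e h = h e := rfl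
  have h0 (k : ℕ) : coeff (single 0 k) h = b⁻¹ * coeff (single 0 (k + q)) f := by
    simp [hcoeff, h, single_add]
  have h1 (k : ℕ) (hk : 0 < k) : coeff (single 1 k) h = a⁻¹ * coeff (single 1 (k + p)) f := by
    simp [hcoeff, h, single_add, hk.ne']
  obtain ⟨u, hu⟩ : X 0 * X 1 ∣ f - h * (C a * X 1 ^ p + C b * X 0 ^ q) := by
    refine X_zero_mul_X_one_dvd_iff.mpr fun k => ⟨?_, ?_⟩
    · rw [map_sub, coeff_single_zero_mul_cusp hp, sub_eq_zero]
      split_ifs with hk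
      · rw [h0, Nat.sub_add_cancel hk, ← mul_assoc, mul_inv_cancel₀ hb, one_mul]
      · exact hx k (not_le.mp hk)
    · rw [map_sub, coeff_single_one_mul_cusp hq, sub_eq_zero]
      rcases Nat.lt_trichotomy k p with hk | rfl | hk
      · rw [if_neg hk.not_ge]
        rcases Nat.eq_zero_or_pos k with rfl | hk0
        · rw [single_zero, ← single_zero (0 : Fin 2)]
          exact hx 0 (Nat.pos_of_ne_zero hq)
        · exact hy k hk0 hk
      · rw [if_pos le_rfl, Nat.sub_self, single_zero, ← single_zero (0 : Fin 2), h0, zero_add,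
          mul_left_comm, hxy, inv_mul_cancel_left₀ hb]
      · rw [if_pos hk.le, h1 _ (Nat.sub_pos_of_lt hk), Nat.sub_add_cancel hk.le,
          mul_inv_cancel_left₀ ha]
  exact Ideal.mem_span_pair.mpr ⟨u, h, by linear_combination -hu⟩

theorem axisCoeffMap_surjective (hp : p ≠ 0) (ha : a ≠ 0) :
    Function.Surjective (axisCoeffMap p q a b) := by
  rintro ⟨v, w, t⟩
  refine ⟨∑ i : Fin q, monomial (single 0 (i : ℕ)) (v i) +
    ∑ j : Fin (p - 1), monomial (single 1 ((j : ℕ) + 1)) (w j) + monomial (single 0 q) (t / a), ?_⟩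
  have hxq (i : Fin q) : q ≠ i := i.isLt.ne'
  have hyp (j : Fin (p - 1)) : p ≠ j + 1 := by omega
  rw [axisCoeffMap_apply]
  simp [coeff_monomial, single_eq_single_iff, (single_injective _).eq_iff, -single_add, Fin.val_inj,
    hxq, Ne.symm (hxq _), hyp, hp, mul_div_cancel₀ _ ha]

theorem finrank_quotient_span_X_zero_mul_X_one (hp : p ≠ 0) (hq : q ≠ 0) (ha : a ≠ 0)
    (hb : b ≠ 0) :
    Module.finrank K (MvPowerSeries (Fin 2) K ⧸
      Ideal.span {X 0 * X 1, C a * X 1 ^ p + C b * X 0 ^ q}) = p + q := by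
  set J : Ideal (MvPowerSeries (Fin 2) K) := Ideal.span {X 0 * X 1, C a * X 1 ^ p + C b * X 0 ^ q}
  have hker : J.restrictScalars K = LinearMap.ker (axisCoeffMap p q a b) :=
    le_antisymm (span_le_ker_axisCoeffMap hp hq) (ker_axisCoeffMap_le_span hp hq ha hb)
  let e : (MvPowerSeries (Fin 2) K ⧸ J) ≃ₗ[K] (Fin q → K) × (Fin (p - 1) → K) × K :=
    ((Submodule.Quotient.restrictScalarsEquiv K J).symm.trans
      (Submodule.quotEquivOfEq _ _ hker)).trans
      ((axisCoeffMap p q a b).quotKerEquivOfSurjective (axisCoeffMap_surjective hp ha))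
  rw [e.finrank_eq, Module.finrank_prod, Module.finrank_prod, Module.finrank_fin_fun,
    Module.finrank_fin_fun, Module.finrank_self]
  omega

end Colength

section Saito

theorem pd_sub {n : ℕ} (i : Fin n) (f g : On n) : pd i (f - g) = pd i f - pd i g := by
  ext e
  show _ * coeff _ (f - g) = _ * coeff _ f - _ * coeff _ g
  rw [map_sub, mul_sub]

theorem pd_X_pow {n : ℕ} (i : Fin n) (k : ℕ) :
    pd i (X i ^ k : On n) = (k : On n) * X i ^ (k - 1) := by
  ext e
  rw [← map_natCast (C (σ := Fin n) (R := ℂ)), coeff_C_mul, coeff_X_pow]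
  show ((e i : ℂ) + 1) * coeff (e + single i 1) (X i ^ k) = _
  rw [coeff_X_pow]
  rcases k with _ | k
  · simp
  · simp only [single_add, add_left_inj, Nat.add_sub_cancel]
    split_ifs with he
    · simp [he]
    · simp

theorem pd_X_pow_of_ne {n : ℕ} {i j : Fin n} (hij : j ≠ i) (k : ℕ) :
    pd j (X i ^ k : On n) = 0 := by
  ext e
  show ((e j : ℂ) + 1) * coeff (e + single j 1) (X i ^ k) = 0
  rw [coeff_X_pow, if_neg, mul_zero]
  intro h
  simpa [single_eq_of_ne hij] using congr($h j)

theorem ev_apply {n : ℕ} (A ξ : Fin n → On n) : ev A ξ = ∑ i, ξ i * A i := by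
  simp [ev, Fintype.linearCombination_apply, smul_eq_mul]

theorem ev_pd_cusp (p q : ℕ) (ξ : Fin 2 → On 2) :
    ev (fun i => pd i (X 1 ^ p - X 0 ^ q)) ξ =
      (p : On 2) * X 1 ^ (p - 1) * ξ 1 - (q : On 2) * X 0 ^ (q - 1) * ξ 0 := by
  rw [ev_apply, Fin.sum_univ_two, pd_sub, pd_sub, pd_X_pow, pd_X_pow, pd_X_pow_of_ne zero_ne_one,
    pd_X_pow_of_ne one_ne_zero]
  ring

def cuspEulerField (p q : ℕ) : Fin 2 → On 2 := ![(p : On 2) * X 0, (q : On 2) * X 1]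

def cuspHamiltonianField (p q : ℕ) : Fin 2 → On 2 :=
  ![(p : On 2) * X 1 ^ (p - 1), (q : On 2) * X 0 ^ (q - 1)]

theorem thetaX_cusp_eq_span {p q : ℕ} (hp : p ≠ 0) (hq : q ≠ 0) :
    ThetaX (X 1 ^ p - X 0 ^ q) =
      Submodule.span (On 2) {cuspEulerField p q, cuspHamiltonianField p q} := by
  have hx : (X 0 : On 2) ^ (q - 1) * X 0 = X 0 ^ q := pow_sub_one_mul hq _
  have hy : (X 1 : On 2) ^ (p - 1) * X 1 = X 1 ^ p := pow_sub_one_mul hp _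
  apply le_antisymm
  · intro ξ hξ
    obtain ⟨c, hc⟩ := Ideal.mem_span_singleton'.mp hξ
    rw [ev_pd_cusp] at hc
    -- `ξ - (c / pq) • euler` is killed by `dφ`
    obtain ⟨s, hs0, hs1⟩ := exists_of_mul_X_pow_eq_mul_X_pow zero_ne_one
      (u := (q : On 2) * ξ 0 - c * X 0) (v := (p : On 2) * ξ 1 - c * X 1) (m := q - 1) (n := p - 1)
      (by linear_combination hc - c * hx + c * hy)
    set κ : On 2 := C ((p * q : ℂ)⁻¹)
    have hκ : (p : On 2) * q * κ = 1 := by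
      rw [← map_natCast C, ← map_natCast C, ← map_mul, ← map_mul,
        mul_inv_cancel₀ (by simp [hp, hq]), map_one]
    refine Submodule.mem_span_pair.mpr ⟨κ * c, κ * s, funext fun i => ?_⟩
    fin_cases i
    · show κ * c * ((p : On 2) * X 0) + κ * s * ((p : On 2) * X 1 ^ (p - 1)) = ξ 0
      linear_combination ξ 0 * hκ - (κ * p) * hs0
    · show κ * c * ((q : On 2) * X 1) + κ * s * ((q : On 2) * X 0 ^ (q - 1)) = ξ 1
      linear_combination ξ 1 * hκ - (κ * q) * hs1
  · rw [Submodule.span_le, Set.insert_subset_iff, Set.singleton_subset_iff]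
    refine ⟨Ideal.mem_span_singleton'.mpr ⟨p * q, ?_⟩, Ideal.mem_span_singleton'.mpr ⟨0, ?_⟩⟩
    · rw [ev_pd_cusp]
      show _ = (p : On 2) * X 1 ^ (p - 1) * ((q : On 2) * X 1) -
        (q : On 2) * X 0 ^ (q - 1) * ((p : On 2) * X 0)
      linear_combination (p * q : On 2) * (hx - hy)
    · rw [ev_pd_cusp]
      show _ = (p : On 2) * X 1 ^ (p - 1) * ((q : On 2) * X 0 ^ (q - 1)) -
        (q : On 2) * X 0 ^ (q - 1) * ((p : On 2) * X 1 ^ (p - 1))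
      ring

end Saito

theorem ev_cuspEulerField (p q : ℕ) (l : ℂ) :
    ev ![X 1, C l * X 0] (cuspEulerField p q) = C ((q : ℂ) * l + p) * (X 0 * X 1) := by
  rw [ev_apply, Fin.sum_univ_two]
  simp only [cuspEulerField, Matrix.cons_val_zero, Matrix.cons_val_one, Matrix.cons_val_fin_one,
    map_add, map_mul, map_natCast]
  ring

theorem ev_cuspHamiltonianField {p q : ℕ} (hp : p ≠ 0) (hq : q ≠ 0) (l : ℂ) :
    ev ![X 1, C l * X 0] (cuspHamiltonianField p q) =
      C (p : ℂ) * X 1 ^ p + C (l * q) * X 0 ^ q := by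
  rw [ev_apply, Fin.sum_univ_two, ← pow_sub_one_mul hp, ← pow_sub_one_mul hq]
  simp only [cuspHamiltonianField, Matrix.cons_val_zero, Matrix.cons_val_one,
    Matrix.cons_val_fin_one, map_natCast, map_mul]
  ring

theorem stmt_8_general (p q : ℕ) (hp : 2 ≤ p) (hq : 2 ≤ q)
    (l : ℂ) (hl : l ≠ 0) (hl' : (q : ℂ) * l + (p : ℂ) ≠ 0) :
    Module.finrank ℂ
      (On 2 ⧸ (Submodule.map
        (ev ![MvPowerSeries.X 1,
              MvPowerSeries.C (σ := Fin 2) (R := ℂ) l * MvPowerSeries.X 0])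
        (ThetaX (MvPowerSeries.X 1 ^ p - MvPowerSeries.X 0 ^ q)) :
          Ideal (On 2))) = p + q := by
  have hp0 : p ≠ 0 := by omega
  have hq0 : q ≠ 0 := by omega
  have hω : Submodule.map (ev ![X 1, C l * X 0]) (ThetaX (X 1 ^ p - X 0 ^ q)) =
      Ideal.span {X 0 * X 1, C (p : ℂ) * X 1 ^ p + C (l * q) * X 0 ^ q} := by
    rw [thetaX_cusp_eq_span hp0 hq0, Submodule.map_span, Set.image_pair, ev_cuspEulerField,
      ev_cuspHamiltonianField hp0 hq0, ← Ideal.span, Ideal.span_insert,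
      Ideal.span_singleton_mul_left_unit (hl'.isUnit.map C), ← Ideal.span_insert]
  rw [hω]
  exact finrank_quotient_span_X_zero_mul_X_one hp0 hq0 (Nat.cast_ne_zero.mpr hp0)
    (mul_ne_zero hl (Nat.cast_ne_zero.mpr hq0))

/-- for `X = {yᵖ - x^q = 0}` (p,q ≥ 2 coprime) and the foliation
`ω = λx dy + y dx` with `λ ≠ 0`, `qλ + p ≠ 0`, the Bruce–Roberts number
`μ_BR(𝓕, X) = dim 𝓞₂/ω(Θ_X)` equals `p + q`. -/
theorem stmt_8 (p q : ℕ) (hp : 2 ≤ p) (hq : 2 ≤ q) (hpq : Nat.Coprime p q)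
    (l : ℂ) (hl : l ≠ 0) (hl' : (q : ℂ) * l + (p : ℂ) ≠ 0) :
    Module.finrank ℂ
      (On 2 ⧸ (Submodule.map
        (ev ![MvPowerSeries.X 1,
              MvPowerSeries.C (σ := Fin 2) (R := ℂ) l * MvPowerSeries.X 0])
        (ThetaX (MvPowerSeries.X 1 ^ p - MvPowerSeries.X 0 ^ q)) :
          Ideal (On 2))) = p + q :=
  stmt_8_general p q hp hq l hl hl'
end
end
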